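/- arXiv:1612.06040 — 6 statements merged into one kernel-verified Lean document; each statement's English description precedes it below -/
import Mathlib

section
/- Every integer point of the rectangle ∏_{i<j}[0, n_i·n_j] × ∏_i [0, C(n_i,2)] in Z^{C(k+1,2)} is realized as the ER-SBM sufficient statistic vector T(g) of some simple graph g on [n] with blocks B_1,...,B_k. In particular, the convex hull of {T(g) : g a simple graph on [n]} equals this rectangle. -/
/-! The unordered pairs of distinct vertices lying over a block pair `{i, j}` number `nᵢ nⱼ`
(resp. `C(nᵢ, 2)` when `i = j`), and these sets are disjoint for distinct block pairs. Choosing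
`a {i, j}` pairs from each of them and taking their union as the edge set realizes any integer
point `a` of the box. The box is the convex hull of its vertices, which are such integer points,
so the convex hull of the realized statistics is the whole box. -/

/-- Number of nodes assigned to block `i`. -/
noncomputable def blockSize {n k : ℕ} (z : Fin n → Fin k) (i : Fin k) : ℕ := {v | z v = i}.ncard

/-- ER-SBM sufficient statistic: number of edges of `g` whose pair of endpoint blocks is `p`. -/
noncomputable def blockStat {n k : ℕ} (z : Fin n → Fin k) (g : SimpleGraph (Fin n)) (p : Sym2 (Fin k)) : ℕ :=
  {e ∈ g.edgeSet | Sym2.map z e = p}.ncard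

section BlockPairs

variable {α β : Type*}

def blockPairs (z : α → β) (p : Sym2 β) : Set (Sym2 α) :=
  {e | ¬e.IsDiag ∧ e.map z = p}

theorem ncard_blockPairs_of_ne (z : α → β) {i j : β} (hij : i ≠ j) :
    (blockPairs z s(i, j)).ncard = {v | z v = i}.ncard * {v | z v = j}.ncard := by
  have himage : blockPairs z s(i, j) =
      (fun q : α × α => s(q.1, q.2)) '' ({v | z v = i} ×ˢ {v | z v = j}) := by
    ext e
    induction e using Sym2.ind with
    | _ u v =>
      simp only [blockPairs, Set.mem_ofPred_eq, Sym2.mk_isDiag_iff, Sym2.map_mk, Sym2.eq_iff,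
        Set.mem_image, Set.mem_prod, Prod.exists]
      constructor
      · rintro ⟨-, ⟨hu, hv⟩ | ⟨hu, hv⟩⟩
        · exact ⟨u, v, ⟨hu, hv⟩, .inl ⟨rfl, rfl⟩⟩
        · exact ⟨v, u, ⟨hv, hu⟩, .inr ⟨rfl, rfl⟩⟩
      · rintro ⟨a, b, ⟨ha, hb⟩, ⟨rfl, rfl⟩ | ⟨rfl, rfl⟩⟩
        · exact ⟨fun h => hij (ha ▸ hb ▸ congrArg z h), .inl ⟨ha, hb⟩⟩
        · exact ⟨fun h => hij (ha ▸ hb ▸ congrArg z h.symm), .inr ⟨hb, ha⟩⟩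
  have hinj : Set.InjOn (fun q : α × α => s(q.1, q.2)) ({v | z v = i} ×ˢ {v | z v = j}) := by
    rintro ⟨u, v⟩ ⟨hu, hv⟩ ⟨u', v'⟩ ⟨hu', hv'⟩ h
    rcases Sym2.eq_iff.1 h with ⟨rfl, rfl⟩ | ⟨rfl, rfl⟩
    · rfl
    · exact absurd (hu.symm.trans hv') hij
  rw [himage, hinj.ncard_image, Set.ncard_prod]

theorem ncard_blockPairs_diag [Finite α] (z : α → β) (i : β) :
    (blockPairs z s(i, i)).ncard = {v | z v = i}.ncard.choose 2 := by
  have himage : blockPairs z s(i, i) = Sym2.map ((↑) : {v | z v = i} → α) '' Sym2.diagSetᶜ := by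
    ext e
    induction e using Sym2.ind with
    | _ u v =>
      simp only [blockPairs, Set.mem_ofPred_eq, Sym2.mk_isDiag_iff, Sym2.map_mk, Sym2.eq_iff,
        Set.mem_image, Set.mem_compl_iff, Sym2.mem_diagSet, Sym2.exists, Subtype.exists,
        Subtype.mk.injEq, or_self]
      constructor
      · rintro ⟨huv, hu, hv⟩
        exact ⟨u, hu, v, hv, huv, .inl ⟨rfl, rfl⟩⟩
      · rintro ⟨a, ha, b, hb, hab, ⟨rfl, rfl⟩ | ⟨rfl, rfl⟩⟩
        · exact ⟨hab, ha, hb⟩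
        · exact ⟨Ne.symm hab, hb, ha⟩
  have := Fintype.ofFinite α
  classical
  rw [himage, (Sym2.map.injective Subtype.val_injective).injOn.ncard_image,
    ← Nat.card_coe_set_eq, Nat.card_eq_fintype_card, Sym2.card_diagSet_compl,
    ← Nat.card_coe_set_eq, Nat.card_eq_fintype_card]

theorem SimpleGraph.exists_ncard_edgeSet_map_eq (z : α → β) (a : Sym2 β → ℕ)
    (ha : ∀ p, a p ≤ (blockPairs z p).ncard) :
    ∃ g : SimpleGraph α, ∀ p, {e ∈ g.edgeSet | e.map z = p}.ncard = a p := by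
  choose S hS hScard using fun p => Set.exists_subset_card_eq (ha p)
  refine ⟨fromEdgeSet (⋃ p, S p), fun p => ?_⟩
  suffices {e ∈ (fromEdgeSet (⋃ q, S q)).edgeSet | e.map z = p} = S p by
    rw [this, hScard]
  ext e
  simp only [edgeSet_fromEdgeSet, Set.mem_ofPred_eq, Set.mem_sdiff, Set.mem_iUnion,
    Sym2.mem_diagSet]
  constructor
  · rintro ⟨⟨⟨q, hq⟩, -⟩, rfl⟩
    rwa [(hS q hq).2]
  · intro he
    exact ⟨⟨⟨p, he⟩, (hS p he).1⟩, (hS p he).2⟩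

end BlockPairs

theorem forall_ncard_blockPairs_iff {n k : ℕ} (z : Fin n → Fin k)
    (P : Sym2 (Fin k) → ℕ → Prop) :
    (∀ p, P p (blockPairs z p).ncard) ↔
      (∀ i j, i ≠ j → P s(i, j) (blockSize z i * blockSize z j)) ∧
        ∀ i, P s(i, i) ((blockSize z i).choose 2) := by
  constructor
  · intro h
    refine ⟨fun i j hij => ?_, fun i => ?_⟩
    · simpa only [ncard_blockPairs_of_ne z hij, blockSize] using h s(i, j)
    · simpa only [ncard_blockPairs_diag, blockSize] using h s(i, i)
  · rintro ⟨hoff, hdiag⟩ p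
    induction p using Sym2.ind with
    | _ i j =>
      obtain rfl | hij := eq_or_ne i j
      · simpa only [ncard_blockPairs_diag, blockSize] using hdiag i
      · simpa only [ncard_blockPairs_of_ne z hij, blockSize] using hoff i j hij

theorem blockStat_le_ncard_blockPairs {n k : ℕ} (z : Fin n → Fin k) (g : SimpleGraph (Fin n))
    (p : Sym2 (Fin k)) : blockStat z g p ≤ (blockPairs z p).ncard :=
  Set.ncard_le_ncard (fun _ he => ⟨g.not_isDiag_of_mem_edgeSet he.1, he.2⟩) (Set.toFinite _)

theorem setOf_blockStat_eq {n k : ℕ} (z : Fin n → Fin k) :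
    {x : Sym2 (Fin k) → ℝ | ∃ g : SimpleGraph (Fin n), ∀ p, x p = (blockStat z g p : ℝ)} =
      {x | ∃ a : Sym2 (Fin k) → ℕ,
        (∀ p, a p ≤ (blockPairs z p).ncard) ∧ ∀ p, x p = (a p : ℝ)} := by
  ext x
  constructor
  · rintro ⟨g, hg⟩
    exact ⟨blockStat z g, blockStat_le_ncard_blockPairs z g, hg⟩
  · rintro ⟨a, ha, hx⟩
    obtain ⟨g, hg⟩ := SimpleGraph.exists_ncard_edgeSet_map_eq z a ha
    exact ⟨g, fun p => by rw [hx, blockStat, hg]⟩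

theorem convexHull_setOf_natCast_le {ι : Type*} [Finite ι] (c : ι → ℕ) :
    convexHull ℝ {x : ι → ℝ | ∃ a : ι → ℕ, (∀ i, a i ≤ c i) ∧ ∀ i, x i = a i} =
      Set.univ.pi fun i => Set.Icc 0 (c i : ℝ) := by
  refine (convexHull_min ?_ (convex_pi fun i _ => convex_Icc _ _)).antisymm ?_
  · rintro x ⟨a, ha, hx⟩ i -
    rw [hx]
    exact ⟨Nat.cast_nonneg _, Nat.cast_le.2 (ha i)⟩
  · have hvertices : Set.univ.pi (fun i => ({0, (c i : ℝ)} : Set ℝ)) ⊆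
        {x : ι → ℝ | ∃ a : ι → ℕ, (∀ i, a i ≤ c i) ∧ ∀ i, x i = a i} := by
      intro x hx
      choose a ha hxa using fun i => show ∃ m ≤ c i, x i = m from
        (hx i trivial).elim (fun h => ⟨0, Nat.zero_le _, by simpa using h⟩)
          fun h => ⟨c i, le_rfl, h⟩
      exact ⟨a, ha, hxa⟩
    refine Eq.trans_subset ?_ (convexHull_mono hvertices)
    simp only [convexHull_pi, convexHull_pair, segment_eq_Icc (Nat.cast_nonneg _)]

theorem stmt1_general {n k : ℕ} (z : Fin n → Fin k) :
    (∀ a : Sym2 (Fin k) → ℕ,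
      (∀ i j : Fin k, i ≠ j → a s(i, j) ≤ blockSize z i * blockSize z j) →
      (∀ i : Fin k, a s(i, i) ≤ (blockSize z i).choose 2) →
      ∃ g : SimpleGraph (Fin n), ∀ p, blockStat z g p = a p) ∧
    convexHull ℝ
        {x : Sym2 (Fin k) → ℝ | ∃ g : SimpleGraph (Fin n), ∀ p, x p = (blockStat z g p : ℝ)} =
      {x : Sym2 (Fin k) → ℝ |
        (∀ i j : Fin k, i ≠ j →
          0 ≤ x s(i, j) ∧ x s(i, j) ≤ (blockSize z i * blockSize z j : ℕ)) ∧
        (∀ i : Fin k, 0 ≤ x s(i, i) ∧ x s(i, i) ≤ ((blockSize z i).choose 2 : ℕ))} := by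
  refine ⟨fun a hoff hdiag => SimpleGraph.exists_ncard_edgeSet_map_eq z a
    ((forall_ncard_blockPairs_iff z fun p c => a p ≤ c).2 ⟨hoff, hdiag⟩), ?_⟩
  rw [setOf_blockStat_eq, convexHull_setOf_natCast_le]
  ext x
  simpa only [Set.mem_pi, Set.mem_univ, true_implies, Set.mem_Icc, Set.mem_ofPred_eq] using
    forall_ncard_blockPairs_iff z fun p c => 0 ≤ x p ∧ x p ≤ (c : ℝ)

theorem stmt1 {n k : ℕ} (z : Fin n → Fin k) (hz : ∀ i, 0 < blockSize z i) :
    (∀ a : Sym2 (Fin k) → ℕ,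
      (∀ i j : Fin k, i ≠ j → a s(i, j) ≤ blockSize z i * blockSize z j) →
      (∀ i : Fin k, a s(i, i) ≤ (blockSize z i).choose 2) →
      ∃ g : SimpleGraph (Fin n), ∀ p, blockStat z g p = a p) ∧
    convexHull ℝ
        {x : Sym2 (Fin k) → ℝ | ∃ g : SimpleGraph (Fin n), ∀ p, x p = (blockStat z g p : ℝ)} =
      {x : Sym2 (Fin k) → ℝ |
        (∀ i j : Fin k, i ≠ j →
          0 ≤ x s(i, j) ∧ x s(i, j) ≤ (blockSize z i * blockSize z j : ℕ)) ∧
        (∀ i : Fin k, 0 ≤ x s(i, i) ∧ x s(i, i) ≤ ((blockSize z i).choose 2 : ℕ))} :=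
  stmt1_general z
end

section
/- Two simple graphs g and h on [n] have the same ER-SBM sufficient statistics (the same number of edges between each pair of blocks and within each block) if and only if g can be transformed into h by a finite sequence of single-edge swaps, where each swap removes an edge {u,v} and adds an edge {y,w} with z(u)=z(y) and z(v)=z(w) (i.e., the two edges connect the same pair of blocks), and each intermediate graph is simple. -/
/-- A single-edge swap: remove an edge `{u,v}` and add a (currently absent) edge `{y,w}`
connecting the same pair of blocks. -/
def swapStep {n k : ℕ} (z : Fin n → Fin k) (g h : SimpleGraph (Fin n)) : Prop :=
  ∃ u v y w : Fin n, g.Adj u v ∧ ¬ g.Adj y w ∧ y ≠ w ∧ z u = z y ∧ z v = z w ∧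
    h = SimpleGraph.fromEdgeSet ((g.edgeSet \ {s(u, v)}) ∪ {s(y, w)})

/-!
A swap exchanges an edge for a non-edge over the same pair of blocks, so it changes no block
count. Conversely, if `g` and `h` have the same counts and `e` is an edge of `g` missing from `h`,
the block pair of `e` carries as many edges in `h` as in `g`, so some edge `e'` of `h` over that
pair is missing from `g`. Swapping `e` for `e'` decreases `|E(g) \ E(h)|` by one and keeps the
counts equal to those of `h`.
-/

namespace Set

variable {α : Type*} {S T P : Set α} {a b : α}

theorem ncard_insert_sdiff_singleton_inter (hS : S.Finite) (ha : a ∈ S) (hb : b ∉ S)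
    (hab : a ∈ P ↔ b ∈ P) : (insert b (S \ {a}) ∩ P).ncard = (S ∩ P).ncard := by
  by_cases hbP : b ∈ P
  · have haSP : a ∈ S ∩ P := ⟨ha, hab.mpr hbP⟩
    have hbSP : b ∉ (S ∩ P) \ {a} := fun h => hb h.1.1
    rw [insert_inter_of_mem hbP, ← inter_sdiff_right_comm,
      ncard_insert_of_notMem hbSP ((hS.inter_of_left P).sdiff),
      ncard_sdiff_singleton_add_one haSP (hS.inter_of_left P)]
  · have haSP : a ∉ S ∩ P := fun h => hbP (hab.mp h.2)
    rw [insert_inter_of_notMem hbP, ← inter_sdiff_right_comm, sdiff_singleton_eq_self haSP]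

theorem exists_mem_sdiff_inter_of_ncard_inter_eq (hS : S.Finite)
    (hST : (S ∩ P).ncard = (T ∩ P).ncard) (ha : a ∈ S \ T) (haP : a ∈ P) :
    ∃ b ∈ T \ S, b ∈ P := by
  by_contra! hTS
  have hsub : T ∩ P ⊆ S ∩ P := fun b hb => ⟨by_contra fun hbS => hTS b ⟨hb.1, hbS⟩ hb.2, hb.2⟩
  have heq : T ∩ P = S ∩ P := eq_of_subset_of_ncard_le hsub hST.le (hS.inter_of_left P)
  exact ha.2 (heq ▸ ⟨ha.1, haP⟩ : a ∈ T ∩ P).1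

end Set

theorem SimpleGraph.edgeSet_fromEdgeSet_insert_sdiff {V : Type*} (G : SimpleGraph V) {b : Sym2 V}
    (hb : ¬ b.IsDiag) (a : Sym2 V) :
    (SimpleGraph.fromEdgeSet (insert b (G.edgeSet \ {a}))).edgeSet = insert b (G.edgeSet \ {a}) := by
  rw [SimpleGraph.edgeSet_fromEdgeSet, sdiff_eq_left, Set.disjoint_left]
  rintro e (rfl | ⟨he, -⟩)
  · exact hb
  · exact G.not_isDiag_of_mem_edgeSet he

section BlockModel

variable {n k : ℕ} {z : Fin n → Fin k} {g h : SimpleGraph (Fin n)}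

theorem blockStat_eq_ncard_inter (z : Fin n → Fin k) (g : SimpleGraph (Fin n)) (p : Sym2 (Fin k)) :
    blockStat z g p = (g.edgeSet ∩ Sym2.map z ⁻¹' {p}).ncard :=
  rfl

theorem swapStep_iff :
    swapStep z g h ↔ ∃ a b, a ∈ g.edgeSet ∧ b ∉ g.edgeSet ∧ ¬ b.IsDiag ∧
      Sym2.map z a = Sym2.map z b ∧ h.edgeSet = insert b (g.edgeSet \ {a}) := by
  constructor
  · rintro ⟨u, v, y, w, huv, hyw, hyw_ne, hzu, hzv, rfl⟩
    refine ⟨s(u, v), s(y, w), huv, hyw, by simpa using hyw_ne, by simp [hzu, hzv], ?_⟩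
    rw [Set.union_singleton, g.edgeSet_fromEdgeSet_insert_sdiff (by simpa using hyw_ne)]
  · rintro ⟨a, b, ha, hb, hbd, hab, hE⟩
    induction a using Sym2.ind with | _ u v => ?_
    induction b using Sym2.ind with | _ y w => ?_
    have hh : h = SimpleGraph.fromEdgeSet ((g.edgeSet \ {s(u, v)}) ∪ {s(y, w)}) := by
      rw [← h.fromEdgeSet_edgeSet, hE, Set.union_singleton]
    rw [Sym2.map_mk, Sym2.map_mk, Sym2.eq_iff] at hab
    rcases hab with ⟨hu, hv⟩ | ⟨hu, hv⟩
    · exact ⟨u, v, y, w, ha, hb, by simpa using hbd, hu, hv, hh⟩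
    · rw [Sym2.eq_swap (a := y)] at hb hbd hh
      exact ⟨u, v, w, y, ha, hb, by simpa using hbd, hu, hv, hh⟩

theorem blockStat_eq_of_swapStep (hgh : swapStep z g h) (p : Sym2 (Fin k)) :
    blockStat z h p = blockStat z g p := by
  obtain ⟨a, b, ha, hb, -, hab, hE⟩ := swapStep_iff.mp hgh
  rw [blockStat_eq_ncard_inter, blockStat_eq_ncard_inter, hE]
  exact Set.ncard_insert_sdiff_singleton_inter (Set.toFinite _) ha hb (by simp [hab])

theorem exists_mem_edgeSet_sdiff_map_eq_of_blockStat_eq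
    (hstat : ∀ p, blockStat z g p = blockStat z h p) {a : Sym2 (Fin n)}
    (ha : a ∈ g.edgeSet \ h.edgeSet) : ∃ b ∈ h.edgeSet \ g.edgeSet, Sym2.map z b = Sym2.map z a :=
  Set.exists_mem_sdiff_inter_of_ncard_inter_eq (Set.toFinite _) (hstat _) ha rfl

theorem eq_of_blockStat_eq_of_edgeSet_subset (hstat : ∀ p, blockStat z g p = blockStat z h p)
    (hgh : g.edgeSet ⊆ h.edgeSet) : g = h := by
  refine SimpleGraph.edgeSet_inj.mp (hgh.antisymm fun b hb => by_contra fun hbg => ?_)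
  obtain ⟨a, ha, -⟩ :=
    exists_mem_edgeSet_sdiff_map_eq_of_blockStat_eq (fun p => (hstat p).symm) ⟨hb, hbg⟩
  exact ha.2 (hgh ha.1)

theorem reflTransGen_swapStep_of_blockStat_eq (hstat : ∀ p, blockStat z g p = blockStat z h p) :
    Relation.ReflTransGen (swapStep z) g h := by
  induction hm : (g.edgeSet \ h.edgeSet).ncard using Nat.strong_induction_on generalizing g with
  | _ m ih =>
  obtain hsub | ⟨a, ha⟩ := (g.edgeSet \ h.edgeSet).eq_empty_or_nonempty
  · rw [eq_of_blockStat_eq_of_edgeSet_subset hstat (Set.sdiff_eq_empty.mp hsub)]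
  obtain ⟨b, hb, hab⟩ := exists_mem_edgeSet_sdiff_map_eq_of_blockStat_eq hstat ha
  have hb_diag : ¬ b.IsDiag := h.not_isDiag_of_mem_edgeSet hb.1
  set g' := SimpleGraph.fromEdgeSet (insert b (g.edgeSet \ {a}))
  have hE' : g'.edgeSet = insert b (g.edgeSet \ {a}) := g.edgeSet_fromEdgeSet_insert_sdiff hb_diag a
  have hstep : swapStep z g g' := swapStep_iff.mpr ⟨a, b, ha.1, hb.2, hb_diag, hab.symm, hE'⟩
  have hdiff : g'.edgeSet \ h.edgeSet = (g.edgeSet \ h.edgeSet) \ {a} := by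
    rw [hE', Set.insert_sdiff_of_mem _ hb.1, sdiff_right_comm]
  refine .head hstep (ih _ ?_ (fun p => (blockStat_eq_of_swapStep hstep p).trans (hstat p)) rfl)
  rw [← hm, hdiff]
  exact Set.ncard_sdiff_singleton_lt_of_mem ha

end BlockModel

theorem stmt3 {n k : ℕ} (z : Fin n → Fin k) (g h : SimpleGraph (Fin n)) :
    (∀ p, blockStat z g p = blockStat z h p) ↔
      Relation.ReflTransGen (swapStep z) g h := by
  refine ⟨reflTransGen_swapStep_of_blockStat_eq, fun hgh => ?_⟩
  induction hgh with
  | refl => exact fun _ => rfl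
  | tail _ hstep ih => exact fun p => (ih p).trans (blockStat_eq_of_swapStep hstep p).symm
end

section
/- The toric ideal of the ER-SBM, i.e., the kernel of the ring homomorphism φ: K[x_{uv} : 1≤u<v≤n] → K[t_{ij} : 1≤i≤j≤k] sending x_{uv} ↦ t_{z(u)z(v)}, is generated by the linear binomials x_{uv} − x_{yw} where {z(u),z(v)} = {z(y),z(w)}, and these linear binomials form the Graver basis of this ideal. -/
open MvPolynomial

/-- Index type of the variables `x_{uv}`, `u ≠ v`: non-diagonal unordered pairs of nodes. -/
def EdgeVar (n : ℕ) : Type := {e : Sym2 (Fin n) // ¬ e.IsDiag}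

/-- The ER-SBM monomial map `x_{uv} ↦ t_{z(u)z(v)}`. -/
noncomputable def phiER {n k : ℕ} (K : Type*) [Field K] (z : Fin n → Fin k) :
    MvPolynomial (EdgeVar n) K →ₐ[K] MvPolynomial (Sym2 (Fin k)) K :=
  MvPolynomial.aeval (fun e => X (Sym2.map z e.1))

/-- The binomial `x^a - x^b`. -/
noncomputable def binom {n : ℕ} (K : Type*) [Field K] (a b : EdgeVar n →₀ ℕ) :
    MvPolynomial (EdgeVar n) K :=
  monomial a 1 - monomial b 1

/-- `x^a - x^b` is a primitive binomial of the toric ideal: it is a nonzero element of the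
kernel and no other nonzero binomial of the kernel divides it componentwise. -/
def Primitive {n k : ℕ} (K : Type*) [Field K] (z : Fin n → Fin k)
    (a b : EdgeVar n →₀ ℕ) : Prop :=
  a ≠ b ∧ binom K a b ∈ RingHom.ker (phiER K z).toRingHom ∧
    ∀ c d : EdgeVar n →₀ ℕ, c ≠ d → binom K c d ∈ RingHom.ker (phiER K z).toRingHom →
      c ≤ a → d ≤ b → c = a ∧ d = b

/-! The map `x_{uv} ↦ t_{z(u)z(v)}` sends variables to variables, so it is a `rename`. Modulo the
differences `x_e - x_{e'}` of variables in the same fibre, every polynomial equals its image under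
a section of the fibres, which vanishes with the original image; hence these differences span the
kernel. If `x^a - x^b` lies in the kernel, `a - b` and `b - a` have the same fibre counts, so when
`a ≠ b` some fibre contains `e` with `a_e > b_e` and `e'` with `b_{e'} > a_{e'}`: the linear
binomial `x_e - x_{e'}` then divides `x^a - x^b` componentwise, and only linear binomials are
primitive. -/

open Finsupp

namespace MvPolynomial

variable {σ τ R : Type*} [CommRing R]

theorem sub_rename_mem_span_X_sub_X (g : σ → τ) (r : σ → σ) (hr : ∀ a, g (r a) = g a)
    (p : MvPolynomial σ R) :
    p - rename r p ∈ Ideal.span {f : MvPolynomial σ R | ∃ a b, g a = g b ∧ f = X a - X b} := by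
  induction p using MvPolynomial.induction_on with
  | C c => simp
  | add p q hp hq =>
    rw [map_add, add_sub_add_comm]
    exact Ideal.add_mem _ hp hq
  | mul_X p a hp =>
    have hX : (X a - X (r a) : MvPolynomial σ R) ∈
        Ideal.span {f : MvPolynomial σ R | ∃ a b, g a = g b ∧ f = X a - X b} :=
      Ideal.subset_span ⟨a, r a, (hr a).symm, rfl⟩
    have hsplit : p * X a - rename r (p * X a)
        = (p - rename r p) * X a + rename r p * (X a - X (r a)) := by
      rw [map_mul, rename_X]; ring
    rw [hsplit]
    exact Ideal.add_mem _ (Ideal.mul_mem_right _ _ hp) (Ideal.mul_mem_left _ _ hX)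

theorem ker_rename (g : σ → τ) :
    RingHom.ker (rename (R := R) g).toRingHom =
      Ideal.span {f : MvPolynomial σ R | ∃ a b, g a = g b ∧ f = X a - X b} := by
  refine le_antisymm (fun p hp => ?_) ?_
  · -- `rename g` factors through the surjection onto `Set.range g`, which has a section `s`.
    set s := Function.surjInv (Set.rangeFactorization_surjective (f := g))
    have hs : ∀ a, g (s (Set.rangeFactorization g a)) = g a := fun a =>
      congrArg Subtype.val (Function.surjInv_eq Set.rangeFactorization_surjective _)
    have hp' : rename (Set.rangeFactorization g) p = 0 := by
      refine rename_injective _ Subtype.val_injective ?_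
      rw [rename_rename, map_zero]
      exact hp
    have hmem := sub_rename_mem_span_X_sub_X g (s ∘ Set.rangeFactorization g) hs p
    rwa [← rename_rename, hp', map_zero, sub_zero] at hmem
  · rw [Ideal.span_le]
    rintro f ⟨a, b, hab, rfl⟩
    simp [RingHom.mem_ker, hab]

theorem monomial_sub_monomial_mem_ker_rename_iff [Nontrivial R] (g : σ → τ) (a b : σ →₀ ℕ) :
    monomial a (1 : R) - monomial b 1 ∈ RingHom.ker (rename (R := R) g).toRingHom ↔
      a.mapDomain g = b.mapDomain g := by
  rw [RingHom.mem_ker, AlgHom.toRingHom_eq_coe, RingHom.coe_coe, map_sub, rename_monomial,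
    rename_monomial, sub_eq_zero, monomial_eq_monomial_iff]
  simp

end MvPolynomial

namespace Finsupp

variable {σ τ : Type*} {g : σ → τ} {a b : σ →₀ ℕ}

theorem mapDomain_tsub_comm (h : a.mapDomain g = b.mapDomain g) :
    (a - b).mapDomain g = (b - a).mapDomain g := by
  have hmax : a + (b - a) = b + (a - b) := by
    ext x
    simp only [coe_add, coe_tsub, Pi.add_apply, Pi.sub_apply]
    omega
  have := congrArg (mapDomain g) hmax
  rw [mapDomain_add, mapDomain_add, h] at this
  exact (add_left_cancel this).symm

theorem exists_single_le_of_mapDomain_eq (h : a.mapDomain g = b.mapDomain g) (hab : a ≠ b) :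
    ∃ e e', e ≠ e' ∧ g e = g e' ∧ single e 1 ≤ a ∧ single e' 1 ≤ b := by
  classical
  have hsub : a - b ≠ 0 := by
    intro hab'
    have hba : b - a = 0 := by
      rw [← mapDomain_apply_eq_zero_iff_of_subsingletonAddUnits g, ← mapDomain_tsub_comm h, hab',
        mapDomain_zero]
    exact hab (le_antisymm (tsub_eq_zero_iff_le.1 hab') (tsub_eq_zero_iff_le.1 hba))
  obtain ⟨e, he⟩ := Finsupp.support_nonempty_iff.2 hsub
  have hge : g e ∈ ((b - a).mapDomain g).support := by
    rw [← mapDomain_tsub_comm h, mapDomain_support_of_subsingletonAddUnits]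
    exact Finset.mem_image_of_mem g he
  rw [mapDomain_support_of_subsingletonAddUnits, Finset.mem_image] at hge
  obtain ⟨e', he', hg⟩ := hge
  rw [mem_support_iff, coe_tsub, Pi.sub_apply] at he he'
  refine ⟨e, e', fun hee => ?_, hg.symm, single_le_iff.2 ?_, single_le_iff.2 ?_⟩
  · subst hee; omega
  · omega
  · omega

theorem single_one_le_single_one_iff {e e' : σ} : single e 1 ≤ single e' 1 ↔ e = e' := by
  classical
  refine ⟨fun h => ?_, fun h => h ▸ le_rfl⟩
  have := single_le_iff.1 h
  rw [single_apply] at this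
  split_ifs at this with hee
  · exact hee.symm
  · omega

end Finsupp

section ERSBM

variable {n k : ℕ} (K : Type*) [Field K] (z : Fin n → Fin k)

theorem phiER_eq_rename : phiER K z = rename (fun e : EdgeVar n => Sym2.map z e.1) :=
  algHom_ext fun _ => by simp [phiER]

variable {K z}

theorem binom_mem_ker_phiER_iff {a b : EdgeVar n →₀ ℕ} :
    binom K a b ∈ RingHom.ker (phiER K z).toRingHom ↔
      a.mapDomain (fun e => Sym2.map z e.1) = b.mapDomain (fun e => Sym2.map z e.1) := by
  rw [phiER_eq_rename]
  exact monomial_sub_monomial_mem_ker_rename_iff _ a b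

theorem primitive_iff {a b : EdgeVar n →₀ ℕ} :
    Primitive K z a b ↔ ∃ e e' : EdgeVar n, e ≠ e' ∧ Sym2.map z e.1 = Sym2.map z e'.1 ∧
      a = single e 1 ∧ b = single e' 1 := by
  have hlinear {e e' : EdgeVar n} (hg : Sym2.map z e.1 = Sym2.map z e'.1) :
      binom K (single e 1) (single e' 1) ∈ RingHom.ker (phiER K z).toRingHom := by
    rw [binom_mem_ker_phiER_iff, mapDomain_single, mapDomain_single, hg]
  constructor
  · rintro ⟨hab, hker, hmin⟩
    obtain ⟨e, e', hne, hg, hea, heb⟩ :=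
      exists_single_le_of_mapDomain_eq (binom_mem_ker_phiER_iff.1 hker) hab
    obtain ⟨rfl, rfl⟩ := hmin _ _ ((single_left_inj one_ne_zero).not.2 hne) (hlinear hg) hea heb
    exact ⟨e, e', hne, hg, rfl, rfl⟩
  · rintro ⟨e, e', hne, hg, rfl, rfl⟩
    refine ⟨(single_left_inj one_ne_zero).not.2 hne, hlinear hg, fun c d hcd hker hc hd => ?_⟩
    obtain ⟨f, f', -, -, hf, hf'⟩ :=
      exists_single_le_of_mapDomain_eq (binom_mem_ker_phiER_iff.1 hker) hcd
    obtain rfl := single_one_le_single_one_iff.1 (hf.trans hc)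
    obtain rfl := single_one_le_single_one_iff.1 (hf'.trans hd)
    exact ⟨le_antisymm hc hf, le_antisymm hd hf'⟩

end ERSBM

theorem stmt4 {n k : ℕ} (K : Type*) [Field K] (z : Fin n → Fin k) :
    RingHom.ker (phiER K z).toRingHom =
      Ideal.span {f : MvPolynomial (EdgeVar n) K |
        ∃ e e' : EdgeVar n, Sym2.map z e.1 = Sym2.map z e'.1 ∧ f = X e - X e'} ∧
    {f : MvPolynomial (EdgeVar n) K | ∃ a b, Primitive K z a b ∧ f = binom K a b} =
      {f : MvPolynomial (EdgeVar n) K |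
        ∃ e e' : EdgeVar n, e ≠ e' ∧ Sym2.map z e.1 = Sym2.map z e'.1 ∧ f = X e - X e'} := by
  refine ⟨by rw [phiER_eq_rename, ker_rename], ?_⟩
  ext f
  simp only [Set.mem_ofPred_eq, primitive_iff]
  constructor
  · rintro ⟨_, _, ⟨e, e', hne, hg, rfl, rfl⟩, rfl⟩
    exact ⟨e, e', hne, hg, rfl⟩
  · rintro ⟨e, e', hne, hg, rfl⟩
    exact ⟨_, _, ⟨e, e', hne, hg, rfl, rfl⟩, rfl⟩
end

section
/- Let T, S be disjoint subsets of the blocks {B_1,...,B_k} with T ∪ S ≠ ∅. For every simple graph g on [n], the additive SBM sufficient statistics x_i = Σ_{v∈B_i} deg_g(v) satisfy Σ_{B_i∈T} x_i − Σ_{B_i∈S} x_i ≤ 2·C(Σ_{B_i∈T} n_i, 2) + Σ_{B_j ∉ T∪S, B_i∈T} n_i n_j. -/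
/-- Additive SBM sufficient statistic: total degree of the nodes in block `i`. -/
noncomputable def addStat {n k : ℕ} (z : Fin n → Fin k) (g : SimpleGraph (Fin n)) (i : Fin k) : ℕ :=
  ∑ v ∈ Finset.univ.filter (fun v => z v = i), (g.neighborSet v).ncard

/-!
Let `A` and `B` be the vertex sets of the blocks in `T` and `S`. A vertex of `A` has at most
`|A| - 1` neighbours in `A`, at most `|(A ∪ B)ᶜ|` outside `A ∪ B`, and its neighbours in `B`
are, counted from the other side, edges between `A` and `B`; there are at most `∑_{w ∈ B} deg w`
of those. Summing over `A` gives `∑_A deg ≤ |A|(|A| - 1) + ∑_B deg + |A| |(A ∪ B)ᶜ|`.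
-/

open Finset

namespace SimpleGraph

variable {V : Type*} [Fintype V] (G : SimpleGraph V) [DecidableRel G.Adj]

lemma degree_le_card_sub_one_add_card_adj_add_card_compl [DecidableEq V] {A : Finset V}
    (B : Finset V) {v : V} (hv : v ∈ A) :
    G.degree v ≤ #A - 1 + #{w ∈ B | G.Adj v w} + #(A ∪ B)ᶜ := by
  have hcover : G.neighborFinset v ⊆ A.erase v ∪ {w ∈ B | G.Adj v w} ∪ (A ∪ B)ᶜ := by
    intro w hw
    rw [mem_neighborFinset] at hw
    by_cases hwA : w ∈ A
    · simp [hwA, hw.ne']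
    by_cases hwB : w ∈ B <;> simp [hwA, hwB, hw]
  calc G.degree v ≤ #(A.erase v ∪ {w ∈ B | G.Adj v w} ∪ (A ∪ B)ᶜ) := card_le_card hcover
    _ ≤ #(A.erase v) + #{w ∈ B | G.Adj v w} + #(A ∪ B)ᶜ :=
      (card_union_le _ _).trans (by gcongr; exact card_union_le _ _)
    _ = #A - 1 + #{w ∈ B | G.Adj v w} + #(A ∪ B)ᶜ := by rw [card_erase_of_mem hv]

lemma sum_card_adj_le_sum_degree (A B : Finset V) :
    ∑ v ∈ A, #{w ∈ B | G.Adj v w} ≤ ∑ w ∈ B, G.degree w := by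
  refine (sum_card_bipartiteAbove_eq_sum_card_bipartiteBelow (r := G.Adj)).trans_le ?_
  refine sum_le_sum fun w _ => card_le_card fun v hv => ?_
  rw [mem_neighborFinset]
  exact (mem_filter.mp hv).2.symm

theorem sum_degree_le [DecidableEq V] (A B : Finset V) :
    ∑ v ∈ A, G.degree v ≤ #A * (#A - 1) + ∑ w ∈ B, G.degree w + #A * #(A ∪ B)ᶜ :=
  calc ∑ v ∈ A, G.degree v
      ≤ ∑ v ∈ A, (#A - 1 + #{w ∈ B | G.Adj v w} + #(A ∪ B)ᶜ) :=
        sum_le_sum fun _ hv => G.degree_le_card_sub_one_add_card_adj_add_card_compl B hv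
    _ = #A * (#A - 1) + ∑ v ∈ A, #{w ∈ B | G.Adj v w} + #A * #(A ∪ B)ᶜ := by
        simp only [sum_add_distrib, sum_const, smul_eq_mul]
    _ ≤ #A * (#A - 1) + ∑ w ∈ B, G.degree w + #A * #(A ∪ B)ᶜ := by
        gcongr; exact G.sum_card_adj_le_sum_degree A B

end SimpleGraph

section Blocks

variable {n k : ℕ} (z : Fin n → Fin k)

lemma sum_addStat_eq_sum_degree (g : SimpleGraph (Fin n)) [DecidableRel g.Adj]
    (T : Finset (Fin k)) :
    ∑ i ∈ T, addStat z g i = ∑ v ∈ univ.filter (z · ∈ T), g.degree v := by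
  simp only [addStat, ← Nat.card_coe_set_eq, Nat.card_eq_fintype_card,
    SimpleGraph.card_neighborSet_eq_degree]
  exact sum_fiberwise_eq_sum_filter univ T z (fun v => g.degree v)

lemma sum_blockSize_eq_card (T : Finset (Fin k)) :
    ∑ i ∈ T, blockSize z i = #(univ.filter (z · ∈ T)) := by
  simp only [blockSize, Set.ncard_eq_toFinset_card', Set.toFinset_ofPred, card_eq_sum_ones]
  exact sum_fiberwise_eq_sum_filter univ T z _

lemma filter_mem_sdiff_union_eq_compl (T S : Finset (Fin k)) :
    univ.filter (z · ∈ univ \ (T ∪ S)) = (univ.filter (z · ∈ T) ∪ univ.filter (z · ∈ S))ᶜ := by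
  ext v
  simp

end Blocks

theorem stmt5_general {n k : ℕ} (z : Fin n → Fin k)
    (T S : Finset (Fin k))
    (g : SimpleGraph (Fin n)) :
    (∑ i ∈ T, (addStat z g i : ℤ)) - ∑ i ∈ S, (addStat z g i : ℤ) ≤
      2 * ((∑ i ∈ T, blockSize z i).choose 2 : ℤ) +
        ∑ i ∈ T, ∑ j ∈ Finset.univ \ (T ∪ S), (blockSize z i * blockSize z j : ℤ) := by
  classical
  have hbound := g.sum_degree_le (univ.filter (z · ∈ T)) (univ.filter (z · ∈ S))
  rw [← sum_addStat_eq_sum_degree, ← sum_addStat_eq_sum_degree, ← sum_blockSize_eq_card,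
    ← filter_mem_sdiff_union_eq_compl, ← sum_blockSize_eq_card] at hbound
  have htwo_choose : 2 * (∑ i ∈ T, blockSize z i).choose 2
      = (∑ i ∈ T, blockSize z i) * (∑ i ∈ T, blockSize z i - 1) := by
    rw [Nat.choose_two_right, mul_comm, Nat.div_two_mul_two_of_even (Nat.even_mul_pred_self _)]
  rw [← sum_mul_sum]
  push_cast [← Nat.cast_sum]
  omega

theorem stmt5 {n k : ℕ} (z : Fin n → Fin k) (hz : ∀ i, 0 < blockSize z i)
    (T S : Finset (Fin k)) (hdisj : Disjoint T S) (hne : (T ∪ S).Nonempty)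
    (g : SimpleGraph (Fin n)) :
    (∑ i ∈ T, (addStat z g i : ℤ)) - ∑ i ∈ S, (addStat z g i : ℤ) ≤
      2 * ((∑ i ∈ T, blockSize z i).choose 2 : ℤ) +
        ∑ i ∈ T, ∑ j ∈ Finset.univ \ (T ∪ S), (blockSize z i * blockSize z j : ℤ) :=
  stmt5_general z T S g
end

section
/- With T, S disjoint subsets of blocks, T ∪ S ≠ ∅, equality Σ_{B_i∈T} x_i − Σ_{B_i∈S} x_i = 2·C(Σ_{B_i∈T} n_i, 2) + Σ_{B_j∉T∪S, B_i∈T} n_i n_j holds for a simple graph g if and only if: (i) the nodes in blocks of T form a clique in g; (ii) the nodes in blocks of S form an independent set in g; (iii) every node in a block of T is adjacent to every node in a block outside T ∪ S; and (iv) no node in a block of S is adjacent to any node in a block outside T ∪ S. -/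
/-!
Put `σ v = 1` on nodes of `T`-blocks, `σ v = -1` on nodes of `S`-blocks and `σ v = 0` elsewhere.
Then `Σ_T x_i - Σ_S x_i = Σ_v σ v · deg v`, and twice this is the sum of `σ v + σ w` over ordered
adjacent pairs. An ordered pair `v ≠ w` contributes at most `max 0 (σ v + σ w)`, which is `2` on
`T × T`, `1` between `T` and the blocks outside `T ∪ S`, and `0` otherwise; summed over all pairs
this is exactly twice the right-hand side. So equality holds iff every pair with `σ v + σ w > 0`
is an edge and no pair with `σ v + σ w < 0` is, which are conditions (i)–(iv).
-/

open Finset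

theorem Nat.two_mul_choose_two_eq (N : ℕ) : 2 * (N.choose 2 : ℤ) = N * N - N := by
  have h := Nat.two_mul_div_two_of_even (Nat.even_mul_pred_self N)
  rw [← Nat.choose_two_right] at h
  rcases N with _ | N
  · simp
  · have := congrArg (Nat.cast : ℕ → ℤ) h
    push_cast at this ⊢
    rw [this]
    ring

namespace SimpleGraph

variable {V : Type*} (G : SimpleGraph V) [DecidableRel G.Adj]

theorem two_mul_sum_mul_degree [Fintype V] {R : Type*} [CommSemiring R] (f : V → R) :
    2 * ∑ v, f v * G.degree v = ∑ v, ∑ w, if G.Adj v w then f v + f w else 0 := by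
  have hdeg : ∀ v, f v * G.degree v = ∑ w, if G.Adj v w then f v else 0 := by
    intro v
    rw [← card_neighborFinset_eq_degree, neighborFinset_eq_filter, sum_ite, sum_const_zero,
      add_zero, sum_const, nsmul_eq_mul, mul_comm]
  have hswap : ∑ v, ∑ w, (if G.Adj v w then f v else 0) =
      ∑ v, ∑ w, if G.Adj v w then f w else 0 := by
    rw [sum_comm]
    simp only [G.adj_comm]
  simp only [ite_add_zero, sum_add_distrib, hdeg, ← hswap, two_mul]

section EdgePotential

variable [DecidableEq V] {R : Type*} [AddCommMonoid R] [LinearOrder R] (p : V → V → R)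

theorem ite_adj_le_ite_ne_max (v w : V) :
    (if G.Adj v w then p v w else 0) ≤ if v ≠ w then max 0 (p v w) else 0 := by
  split_ifs with hadj hne hne
  · exact le_max_right _ _
  · exact absurd (G.ne_of_adj hadj) hne
  · exact le_max_left _ _
  · exact le_rfl

theorem ite_adj_eq_ite_ne_max_iff (v w : V) :
    ((if G.Adj v w then p v w else 0) = if v ≠ w then max 0 (p v w) else 0) ↔
      (v ≠ w → (0 < p v w → G.Adj v w) ∧ (p v w < 0 → ¬ G.Adj v w)) := by
  by_cases hadj : G.Adj v w
  · simp [hadj, G.ne_of_adj hadj]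
  · by_cases hvw : v = w
    · simp [hvw]
    · simp [hadj, hvw, eq_comm (a := (0 : R))]

theorem sum_adj_eq_sum_ne_max_iff [Fintype V] [IsOrderedCancelAddMonoid R] :
    (∑ v, ∑ w, if G.Adj v w then p v w else 0) =
        ∑ v, ∑ w, (if v ≠ w then max 0 (p v w) else 0) ↔
      ∀ v w, v ≠ w → (0 < p v w → G.Adj v w) ∧ (p v w < 0 → ¬ G.Adj v w) := by
  rw [sum_eq_sum_iff_of_le fun v _ => sum_le_sum fun w _ => G.ite_adj_le_ite_ne_max p v w]
  simp only [mem_univ, forall_const,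
    sum_eq_sum_iff_of_le fun w _ => G.ite_adj_le_ite_ne_max p _ w, ite_adj_eq_ite_ne_max_iff]

end EdgePotential

end SimpleGraph

section BlockSign

variable {V ι : Type*} [DecidableEq ι] (z : V → ι) (T S : Finset ι)

def blockSign (v : V) : ℤ := (if z v ∈ T then 1 else 0) - (if z v ∈ S then 1 else 0)

variable {T S}

theorem blockSign_add_pos_iff (hdisj : Disjoint T S) (u v : V) :
    0 < blockSign z T S u + blockSign z T S v ↔
      z u ∈ T ∧ z v ∈ T ∨ z u ∈ T ∧ z v ∉ T ∪ S ∨ z u ∉ T ∪ S ∧ z v ∈ T := by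
  have hu : z u ∈ T → z u ∉ S := fun h => disjoint_left.mp hdisj h
  have hv : z v ∈ T → z v ∉ S := fun h => disjoint_left.mp hdisj h
  simp only [blockSign, mem_union]
  split_ifs <;> simp_all

theorem blockSign_add_neg_iff (hdisj : Disjoint T S) (u v : V) :
    blockSign z T S u + blockSign z T S v < 0 ↔
      z u ∈ S ∧ z v ∈ S ∨ z u ∈ S ∧ z v ∉ T ∪ S ∨ z u ∉ T ∪ S ∧ z v ∈ S := by
  have h := blockSign_add_pos_iff z hdisj.symm u v
  simp only [blockSign, union_comm S T] at h ⊢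
  rw [← h]
  constructor <;> intro <;> linarith

theorem blockSign_adj_iff (hdisj : Disjoint T S) (g : SimpleGraph V) :
    (∀ u v, u ≠ v → (0 < blockSign z T S u + blockSign z T S v → g.Adj u v) ∧
        (blockSign z T S u + blockSign z T S v < 0 → ¬ g.Adj u v)) ↔
      (∀ u v, z u ∈ T → z v ∈ T → u ≠ v → g.Adj u v) ∧
      (∀ u v, z u ∈ S → z v ∈ S → ¬ g.Adj u v) ∧
      (∀ u v, z u ∈ T → z v ∉ T ∪ S → g.Adj u v) ∧
      (∀ u v, z u ∈ S → z v ∉ T ∪ S → ¬ g.Adj u v) := by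
  have ne_of_mem_of_not_mem {U : Finset ι} {u v : V} (hu : z u ∈ U) (hv : z v ∉ T ∪ S)
      (hU : U ⊆ T ∪ S) : u ≠ v := by
    rintro rfl
    exact hv (hU hu)
  constructor
  · intro h
    refine ⟨fun u v hu hv huv => ?_, fun u v hu hv hadj => ?_,
      fun u v hu hv => ?_, fun u v hu hv hadj => ?_⟩
    · exact (h u v huv).1 ((blockSign_add_pos_iff z hdisj u v).2 (Or.inl ⟨hu, hv⟩))
    · exact (h u v (g.ne_of_adj hadj)).2
        ((blockSign_add_neg_iff z hdisj u v).2 (Or.inl ⟨hu, hv⟩)) hadj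
    · exact (h u v (ne_of_mem_of_not_mem hu hv subset_union_left)).1
        ((blockSign_add_pos_iff z hdisj u v).2 (Or.inr (Or.inl ⟨hu, hv⟩)))
    · exact (h u v (ne_of_mem_of_not_mem hu hv subset_union_right)).2
        ((blockSign_add_neg_iff z hdisj u v).2 (Or.inr (Or.inl ⟨hu, hv⟩))) hadj
  · rintro ⟨hTT, hSS, hTC, hSC⟩ u v huv
    constructor
    · rw [blockSign_add_pos_iff z hdisj]
      rintro (⟨hu, hv⟩ | ⟨hu, hv⟩ | ⟨hu, hv⟩)
      · exact hTT u v hu hv huv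
      · exact hTC u v hu hv
      · exact (hTC v u hv hu).symm
    · rw [blockSign_add_neg_iff z hdisj]
      rintro (⟨hu, hv⟩ | ⟨hu, hv⟩ | ⟨hu, hv⟩)
      · exact hSS u v hu hv
      · exact hSC u v hu hv
      · exact fun hadj => hSC v u hv hu hadj.symm

end BlockSign

section Blocks

variable {n k : ℕ} (z : Fin n → Fin k)

theorem sum_blockSize (W : Finset (Fin k)) :
    ∑ i ∈ W, blockSize z i = #{v | z v ∈ W} := by
  have hfiber (i : Fin k) : blockSize z i = #{v | z v = i} := by
    rw [blockSize, Set.ncard_eq_toFinset_card', Set.toFinset_ofPred]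
  simp only [hfiber, card_eq_sum_ones, sum_fiberwise_eq_sum_filter]

theorem sum_addStat (g : SimpleGraph (Fin n)) [DecidableRel g.Adj] (W : Finset (Fin k)) :
    ∑ i ∈ W, (addStat z g i : ℤ) = ∑ v, (if z v ∈ W then 1 else 0) * (g.degree v : ℤ) := by
  have hdeg (v : Fin n) : (g.neighborSet v).ncard = g.degree v := by
    rw [Set.ncard_eq_toFinset_card', Set.toFinset_card, g.card_neighborSet_eq_degree]
  simp only [addStat, hdeg, Nat.cast_sum]
  rw [sum_fiberwise_eq_sum_filter, sum_filter]
  simp only [ite_mul, one_mul, zero_mul]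

theorem sum_addStat_sub_sum_addStat (g : SimpleGraph (Fin n)) [DecidableRel g.Adj]
    (T S : Finset (Fin k)) :
    ∑ i ∈ T, (addStat z g i : ℤ) - ∑ i ∈ S, (addStat z g i : ℤ) =
      ∑ v, blockSign z T S v * g.degree v := by
  simp only [sum_addStat, ← sum_sub_distrib, blockSign, sub_mul]

theorem cast_sum_blockSize_eq_sum_ite (W : Finset (Fin k)) :
    (∑ i ∈ W, (blockSize z i : ℤ)) = ∑ v, if z v ∈ W then 1 else 0 := by
  rw [← Nat.cast_sum, sum_blockSize, sum_boole]

theorem sum_ne_max_blockSign_add {T S : Finset (Fin k)} (hdisj : Disjoint T S) :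
    ∑ v, ∑ w, (if v ≠ w then max 0 (blockSign z T S v + blockSign z T S w) else 0) =
      2 * (2 * ((∑ i ∈ T, blockSize z i).choose 2 : ℤ) +
        ∑ i ∈ T, ∑ j ∈ univ \ (T ∪ S), (blockSize z i * blockSize z j : ℤ)) := by
  set a : Fin n → ℤ := fun v => if z v ∈ T then 1 else 0
  set c : Fin n → ℤ := fun v => if z v ∈ univ \ (T ∪ S) then 1 else 0
  -- off the diagonal, `max 0 (σ v + σ w)` is `2` inside `T`, `1` between `T` and `univ \ (T ∪ S)`
  have hpoint (v w : Fin n) :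
      (if v ≠ w then max 0 (blockSign z T S v + blockSign z T S w) else 0) =
        2 * (a v * a w - if v = w then a v else 0) + (a v * c w + c v * a w) := by
    have hv : z v ∈ T → z v ∉ S := fun h => disjoint_left.mp hdisj h
    have hw : z w ∈ T → z w ∉ S := fun h => disjoint_left.mp hdisj h
    by_cases hvw : v = w
    · subst hvw
      simp only [a, c, blockSign, mem_sdiff, mem_union]
      split_ifs <;> simp_all
    · simp only [a, c, blockSign, mem_sdiff, mem_union]
      split_ifs <;> simp_all
  have hN : ((∑ i ∈ T, blockSize z i : ℕ) : ℤ) = ∑ v, a v := by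
    rw [Nat.cast_sum, cast_sum_blockSize_eq_sum_ite]
  rw [Nat.two_mul_choose_two_eq, hN, ← sum_mul_sum, cast_sum_blockSize_eq_sum_ite,
    cast_sum_blockSize_eq_sum_ite]
  simp only [hpoint, sum_add_distrib, sum_sub_distrib, ← mul_sum, ← sum_mul, sum_ite_eq, mem_univ,
    if_true]
  ring

end Blocks

theorem stmt6_general {n k : ℕ} (z : Fin n → Fin k)
    (T S : Finset (Fin k)) (hdisj : Disjoint T S)
    (g : SimpleGraph (Fin n)) :
    ((∑ i ∈ T, (addStat z g i : ℤ)) - ∑ i ∈ S, (addStat z g i : ℤ) =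
      2 * ((∑ i ∈ T, blockSize z i).choose 2 : ℤ) +
        ∑ i ∈ T, ∑ j ∈ Finset.univ \ (T ∪ S), (blockSize z i * blockSize z j : ℤ)) ↔
    ((∀ u v : Fin n, z u ∈ T → z v ∈ T → u ≠ v → g.Adj u v) ∧
     (∀ u v : Fin n, z u ∈ S → z v ∈ S → ¬ g.Adj u v) ∧
     (∀ u v : Fin n, z u ∈ T → z v ∉ T ∪ S → g.Adj u v) ∧
     (∀ u v : Fin n, z u ∈ S → z v ∉ T ∪ S → ¬ g.Adj u v)) := by
  classical
  rw [sum_addStat_sub_sum_addStat, ← blockSign_adj_iff z hdisj g, ← g.sum_adj_eq_sum_ne_max_iff,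
    ← g.two_mul_sum_mul_degree, sum_ne_max_blockSign_add z hdisj]
  exact (mul_right_inj' two_ne_zero).symm

theorem stmt6 {n k : ℕ} (z : Fin n → Fin k) (hz : ∀ i, 0 < blockSize z i)
    (T S : Finset (Fin k)) (hdisj : Disjoint T S) (hne : (T ∪ S).Nonempty)
    (g : SimpleGraph (Fin n)) :
    ((∑ i ∈ T, (addStat z g i : ℤ)) - ∑ i ∈ S, (addStat z g i : ℤ) =
      2 * ((∑ i ∈ T, blockSize z i).choose 2 : ℤ) +
        ∑ i ∈ T, ∑ j ∈ Finset.univ \ (T ∪ S), (blockSize z i * blockSize z j : ℤ)) ↔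
    ((∀ u v : Fin n, z u ∈ T → z v ∈ T → u ≠ v → g.Adj u v) ∧
     (∀ u v : Fin n, z u ∈ S → z v ∈ S → ¬ g.Adj u v) ∧
     (∀ u v : Fin n, z u ∈ T → z v ∉ T ∪ S → g.Adj u v) ∧
     (∀ u v : Fin n, z u ∈ S → z v ∉ T ∪ S → ¬ g.Adj u v)) :=
  stmt6_general z T S hdisj g
end

section
/- The additive SBM model polytope, the convex hull of {(Σ_{v∈B_1} deg_g(v),...,Σ_{v∈B_k} deg_g(v)) : g a simple graph on [n]}, equals the intersection of the half-spaces Σ_{B_i∈T} x_i − Σ_{B_i∈S} x_i ≤ 2·C(Σ_{B_i∈T} n_i, 2) + Σ_{B_j∉T∪S, B_i∈T} n_i n_j, over all pairs of disjoint subsets T, S of the blocks with T ∪ S ≠ ∅. -/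
/-!
The support function of the polytope in a direction `c ∈ ℝᵏ` is attained by the graph joining
`u ≠ v` exactly when `c (z u) + c (z v) > 0`, so it equals `h(c) = ½ ∑_{u ≠ v} (c (z u) + c (z v))⁺`,
and the polytope is `{x | ∀ c, c ⬝ x ≤ h(c)}`. For a sign vector `c` with positive part `T` and
negative part `S`, `h(c)` is the right-hand side of the `(T, S)` inequality. The inequalities for
sign vectors imply all the others: if `a` is the smallest nonzero `|cᵢ|`, then
`h(c) = a h(sign c) + h(c - a sign c)`, because subtracting `a sign c` moves every coordinate
towards `0` without crossing it, and `c - a sign c` has smaller support.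
-/

open Finset Matrix

theorem mem_convexHull_range_iff_forall_dotProduct_le {α ι : Type*} [Finite α] [Fintype ι]
    {f : α → ι → ℝ} {h : (ι → ℝ) → ℝ} (hle : ∀ c a, c ⬝ᵥ f a ≤ h c)
    (hattain : ∀ c, ∃ a, c ⬝ᵥ f a = h c) {x : ι → ℝ} :
    x ∈ convexHull ℝ (Set.range f) ↔ ∀ c, c ⬝ᵥ x ≤ h c := by
  refine ⟨fun hx c => ?_, fun hx => ?_⟩
  · have hconv : Convex ℝ {y : ι → ℝ | c ⬝ᵥ y ≤ h c} :=
      convex_halfSpace_le ⟨dotProduct_add c, fun r y => dotProduct_smul r c y⟩ _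
    exact convexHull_min (Set.range_subset_iff.2 (hle c)) hconv hx
  · classical
    rw [← iInter_halfSpaces_eq (convex_convexHull ℝ _)
      ((Set.finite_range f).isCompact_convexHull ℝ).isClosed]
    refine Set.mem_iInter.2 fun l => ?_
    set c : ι → ℝ := fun i => l fun j => if i = j then 1 else 0
    have hl : ∀ y, l y = c ⬝ᵥ y := fun y => by
      simpa [dotProduct, mul_comm] using (l : (ι → ℝ) →ₗ[ℝ] ℝ).pi_apply_eq_sum_univ y
    obtain ⟨a, ha⟩ := hattain c
    exact ⟨f a, subset_convexHull ℝ _ ⟨a, rfl⟩, by rw [hl, hl, ha]; exact hx c⟩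

noncomputable def signVec {ι : Type*} (c : ι → ℝ) : ι → ℝ := fun i => (SignType.sign (c i) : ℝ)

theorem posPart_add_eq_mul_sign_add {a s t : ℝ} (hs : s ≠ 0 → a ≤ |s|) (ht : t ≠ 0 → a ≤ |t|) :
    (s + t)⁺ = a * ((SignType.sign s : ℝ) + SignType.sign t)⁺ +
      (s - a * SignType.sign s + (t - a * SignType.sign t))⁺ := by
  rcases lt_trichotomy s 0 with hs' | rfl | hs' <;> rcases lt_trichotomy t 0 with ht' | rfl | ht' <;>
  simp_all [ne_of_lt, ne_of_gt, sign_neg, sign_pos, abs_of_neg, abs_of_pos, posPart_def,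
    max_def] <;>
  split_ifs <;> linarith

theorem dotProduct_le_of_forall_signVec {ι : Type*} [Fintype ι] {h : (ι → ℝ) → ℝ} {x : ι → ℝ}
    (hsplit : ∀ (c : ι → ℝ) (a : ℝ), (∀ i, c i ≠ 0 → a ≤ |c i|) →
      h c = a * h (signVec c) + h (c - a • signVec c))
    (hsign : ∀ c, c ≠ 0 → signVec c ⬝ᵥ x ≤ h (signVec c)) (c : ι → ℝ) : c ⬝ᵥ x ≤ h c := by
  classical
  induction hN : #{i | c i ≠ 0} using Nat.strong_induction_on generalizing c with
  | _ N ih =>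
    rcases eq_or_ne c 0 with rfl | hc
    · have hsign0 : signVec (0 : ι → ℝ) = 0 := funext fun _ => by simp [signVec]
      have h0 : h 0 = 1 * h 0 + h 0 := by simpa [hsign0] using hsplit 0 1 (by simp)
      simp only [zero_dotProduct]
      linarith
    obtain ⟨i₀, hi₀, hmin⟩ := exists_min_image {i | c i ≠ 0} (|c ·|)
      (by simpa [Finset.Nonempty, funext_iff] using hc)
    set a := |c i₀|
    set c' := c - a • signVec c
    have hsupp : #{i | c' i ≠ 0} < N := by
      rw [← hN]
      refine card_lt_card ((ssubset_iff_of_subset fun i hi => ?_).2 ⟨i₀, hi₀, ?_⟩)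
      · simp only [mem_filter, mem_univ, true_and] at hi ⊢
        contrapose! hi
        simp [c', signVec, hi]
      · have : a * SignType.sign (c i₀) = c i₀ := by rw [mul_comm, sign_mul_abs]
        simp only [mem_filter, mem_univ, true_and, not_not]
        simp [c', signVec, this]
    calc c ⬝ᵥ x = a * (signVec c ⬝ᵥ x) + c' ⬝ᵥ x := by
          simp only [c', sub_dotProduct, smul_dotProduct, smul_eq_mul]; ring
      _ ≤ a * h (signVec c) + h c' :=
          add_le_add (mul_le_mul_of_nonneg_left (hsign c hc) (abs_nonneg _)) (ih _ hsupp c' rfl)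
      _ = h c := (hsplit c a fun i hi => hmin i (by simpa using hi)).symm

section SignIndicator

variable {ι : Type*} [DecidableEq ι]

def signIndicator (T S : Finset ι) (i : ι) : ℝ := if i ∈ T then 1 else if i ∈ S then -1 else 0

theorem dotProduct_signIndicator [Fintype ι] {T S : Finset ι} (hTS : Disjoint T S) (x : ι → ℝ) :
    signIndicator T S ⬝ᵥ x = ∑ i ∈ T, x i - ∑ i ∈ S, x i := by
  have hsplit : ∀ i, signIndicator T S i * x i =
      (if i ∈ T then x i else 0) - if i ∈ S then x i else 0 := fun i => by
    by_cases hT : i ∈ T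
    · simp [signIndicator, hT, disjoint_left.1 hTS hT]
    · by_cases hS : i ∈ S <;> simp [signIndicator, hT, hS]
  simp only [dotProduct, hsplit, sum_sub_distrib, sum_ite_mem, univ_inter]

theorem exists_signVec_eq_signIndicator [Fintype ι] {c : ι → ℝ} (hc : c ≠ 0) :
    ∃ T S : Finset ι, Disjoint T S ∧ (T ∪ S).Nonempty ∧ signVec c = signIndicator T S := by
  refine ⟨univ.filter (0 < c ·), univ.filter (c · < 0),
    disjoint_filter.2 fun i _ h h' => (h.trans h').false, ?_, funext fun i => ?_⟩
  · obtain ⟨i, hi⟩ := Function.ne_iff.1 hc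
    rcases hi.lt_or_gt with h | h
    exacts [⟨i, mem_union_right _ (by simpa using h)⟩, ⟨i, mem_union_left _ (by simpa using h)⟩]
  · rcases lt_trichotomy (c i) 0 with h | h | h <;>
      simp [signVec, signIndicator, h, sign_neg, sign_pos, not_lt_of_gt]

end SignIndicator

theorem sum_sum_compl_singleton_mul {ι R : Type*} [Fintype ι] [DecidableEq ι] [CommRing R]
    (f g : ι → R) :
    ∑ u, ∑ v ∈ ({u}ᶜ : Finset ι), f u * g v = (∑ u, f u) * (∑ v, g v) - ∑ u, f u * g u := by
  simp only [sum_mul_sum, ← sum_sub_distrib, ← sum_erase_eq_sub (mem_univ _), compl_eq_univ_sdiff,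
    sdiff_singleton_eq_erase]

theorem ncard_neighborSet_eq_sum {V : Type*} [Fintype V] (g : SimpleGraph V)
    [DecidableRel g.Adj] (v : V) :
    ((g.neighborSet v).ncard : ℝ) = ∑ u, if g.Adj v u then 1 else 0 := by
  rw [Set.ncard_eq_toFinset_card', sum_boole]
  congr 2
  ext u
  simp

namespace AdditiveSBM

variable {n k : ℕ}

noncomputable def supportFun (z : Fin n → Fin k) (c : Fin k → ℝ) : ℝ :=
  (∑ u, ∑ v ∈ ({u}ᶜ : Finset (Fin n)), (c (z u) + c (z v))⁺) / 2

theorem two_mul_dotProduct_addStat (z : Fin n → Fin k) (g : SimpleGraph (Fin n))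
    [DecidableRel g.Adj] (c : Fin k → ℝ) :
    2 * (c ⬝ᵥ fun i => (addStat z g i : ℝ)) =
      ∑ u, ∑ v ∈ ({u}ᶜ : Finset (Fin n)), if g.Adj u v then c (z u) + c (z v) else 0 := by
  have hdeg : (c ⬝ᵥ fun i => (addStat z g i : ℝ)) = ∑ u, ∑ v, if g.Adj u v then c (z u) else 0 :=
    calc (c ⬝ᵥ fun i => (addStat z g i : ℝ))
        _ = ∑ u, c (z u) * ((g.neighborSet u).ncard : ℝ) := by
          simp only [dotProduct, addStat, Nat.cast_sum, mul_sum]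
          rw [← sum_fiberwise univ z fun u => c (z u) * ((g.neighborSet u).ncard : ℝ)]
          exact sum_congr rfl fun i _ => sum_congr rfl fun u hu => by rw [(mem_filter.1 hu).2]
        _ = _ := by simp only [ncard_neighborSet_eq_sum, mul_sum, mul_ite, mul_one, mul_zero]
  have hswap : ∑ u, ∑ v, (if g.Adj u v then c (z u) else 0) =
      ∑ u, ∑ v, if g.Adj u v then c (z v) else 0 := by
    rw [sum_comm]
    simp only [g.adj_comm]
  rw [two_mul, hdeg]
  nth_rw 2 [hswap]
  rw [← sum_add_distrib]
  refine sum_congr rfl fun u _ => ?_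
  rw [← sum_add_distrib, ← sum_subset (subset_univ _) fun v _ hv => ?_]
  · exact sum_congr rfl fun v _ => by split_ifs <;> ring
  · simp [show v = u by simpa using hv]

theorem dotProduct_addStat_le_supportFun (z : Fin n → Fin k) (c : Fin k → ℝ)
    (g : SimpleGraph (Fin n)) : (c ⬝ᵥ fun i => (addStat z g i : ℝ)) ≤ supportFun z c := by
  classical
  rw [supportFun, le_div_iff₀ two_pos, mul_comm, two_mul_dotProduct_addStat]
  gcongr with u _ v _
  split_ifs
  exacts [le_posPart _, posPart_nonneg _]

theorem exists_dotProduct_addStat_eq_supportFun (z : Fin n → Fin k) (c : Fin k → ℝ) :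
    ∃ g : SimpleGraph (Fin n), (c ⬝ᵥ fun i => (addStat z g i : ℝ)) = supportFun z c := by
  classical
  refine ⟨SimpleGraph.fromRel fun u v => 0 < c (z u) + c (z v), ?_⟩
  rw [supportFun, eq_div_iff two_ne_zero, mul_comm, two_mul_dotProduct_addStat]
  refine sum_congr rfl fun u _ => sum_congr rfl fun v hv => ?_
  have hvu : u ≠ v := by simpa [eq_comm] using hv
  by_cases h : 0 < c (z u) + c (z v)
  · simp [hvu, h, h.le]
  · simp [hvu, h, add_comm (c (z v)), posPart_eq_zero.2 (not_lt.1 h)]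

theorem supportFun_eq_mul_signVec_add (z : Fin n → Fin k) {c : Fin k → ℝ} {a : ℝ}
    (hc : ∀ i, c i ≠ 0 → a ≤ |c i|) :
    supportFun z c = a * supportFun z (signVec c) + supportFun z (c - a • signVec c) := by
  simp only [supportFun, mul_div_assoc', ← add_div, mul_sum, ← sum_add_distrib]
  congr 1
  exact sum_congr rfl fun u _ => sum_congr rfl fun v _ =>
    posPart_add_eq_mul_sign_add (hc _) (hc _)

theorem sum_blockSize (z : Fin n → Fin k) (W : Finset (Fin k)) :
    ∑ i ∈ W, blockSize z i = #{v | z v ∈ W} := by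
  rw [card_eq_sum_card_fiberwise (f := z) (t := W) fun v hv => by simpa using hv]
  refine sum_congr rfl fun i hi => ?_
  rw [blockSize, Set.ncard_eq_toFinset_card', Set.toFinset_ofPred]
  congr 1
  ext v
  simp only [mem_filter, mem_univ, true_and]
  exact ⟨fun h => ⟨h ▸ hi, h⟩, And.right⟩

theorem sum_boole_mem_eq_sum_blockSize (z : Fin n → Fin k) (W : Finset (Fin k)) :
    ∑ v, (if z v ∈ W then (1 : ℝ) else 0) = ∑ i ∈ W, (blockSize z i : ℝ) := by
  rw [sum_boole, ← Nat.cast_sum, sum_blockSize]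

noncomputable def facetBound (z : Fin n → Fin k) (T S : Finset (Fin k)) : ℝ :=
  2 * ((∑ i ∈ T, blockSize z i).choose 2 : ℕ) +
    ∑ i ∈ T, ∑ j ∈ Finset.univ \ (T ∪ S), ((blockSize z i * blockSize z j : ℕ) : ℝ)

theorem supportFun_signIndicator (z : Fin n → Fin k) {T S : Finset (Fin k)} (hTS : Disjoint T S) :
    supportFun z (signIndicator T S) = facetBound z T S := by
  set R := univ \ (T ∪ S)
  set τ : Fin n → ℝ := fun u => if z u ∈ T then 1 else 0
  set ρ : Fin n → ℝ := fun u => if z u ∈ R then 1 else 0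
  have hττ : ∀ u, τ u * τ u = τ u := fun u => by by_cases h : z u ∈ T <;> simp [τ, h]
  have hτρ : ∀ u, τ u * ρ u = 0 := fun u => by by_cases h : z u ∈ T <;> simp [τ, ρ, R, h]
  have hρτ : ∀ u, ρ u * τ u = 0 := fun u => by rw [mul_comm, hτρ]
  have hτ : ∑ u, τ u = ∑ i ∈ T, (blockSize z i : ℝ) := sum_boole_mem_eq_sum_blockSize z T
  have hρ : ∑ u, ρ u = ∑ i ∈ R, (blockSize z i : ℝ) := sum_boole_mem_eq_sum_blockSize z R
  have hpair : ∀ u v, (signIndicator T S (z u) + signIndicator T S (z v))⁺ =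
      2 * τ u * τ v + τ u * ρ v + ρ u * τ v := fun u v => by
    have hS : ∀ {l}, l ∈ S → l ∉ T := fun h hT => disjoint_left.1 hTS hT h
    simp only [signIndicator, τ, ρ, R, mem_sdiff, mem_univ, mem_union, true_and]
    split_ifs <;> simp_all [one_add_one_eq_two]
  simp only [supportFun, hpair, sum_add_distrib]
  rw [sum_sum_compl_singleton_mul, sum_sum_compl_singleton_mul, sum_sum_compl_singleton_mul]
  simp only [mul_assoc, hττ, hτρ, hρτ, sum_const_zero, ← mul_sum, hτ, hρ, facetBound,
    Nat.cast_choose_two]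
  push_cast
  rw [← sum_mul_sum]
  ring

end AdditiveSBM

open AdditiveSBM in
theorem stmt7_general {n k : ℕ} (z : Fin n → Fin k) :
    convexHull ℝ
        {x : Fin k → ℝ | ∃ g : SimpleGraph (Fin n), ∀ i, x i = (addStat z g i : ℝ)} =
      {x : Fin k → ℝ | ∀ T S : Finset (Fin k), Disjoint T S → (T ∪ S).Nonempty →
        (∑ i ∈ T, x i) - ∑ i ∈ S, x i ≤
          2 * ((∑ i ∈ T, blockSize z i).choose 2 : ℕ) +
            ∑ i ∈ T, ∑ j ∈ Finset.univ \ (T ∪ S), ((blockSize z i * blockSize z j : ℕ) : ℝ)} := by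
  have hrange : {x : Fin k → ℝ | ∃ g : SimpleGraph (Fin n), ∀ i, x i = (addStat z g i : ℝ)} =
      Set.range fun g i => (addStat z g i : ℝ) := by
    ext x
    simp [funext_iff, eq_comm]
  ext x
  rw [hrange, mem_convexHull_range_iff_forall_dotProduct_le (dotProduct_addStat_le_supportFun z)
    (exists_dotProduct_addStat_eq_supportFun z)]
  refine ⟨fun hx T S hTS _ => ?_, fun hx => dotProduct_le_of_forall_signVec
    (fun c a ha => supportFun_eq_mul_signVec_add z ha) fun c hc => ?_⟩
  · rw [← dotProduct_signIndicator hTS]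
    exact (hx _).trans_eq (supportFun_signIndicator z hTS)
  · obtain ⟨T, S, hTS, hne, hsign⟩ := exists_signVec_eq_signIndicator hc
    rw [hsign, dotProduct_signIndicator hTS, supportFun_signIndicator z hTS]
    exact hx T S hTS hne

theorem stmt7 {n k : ℕ} (z : Fin n → Fin k) (hz : ∀ i, 0 < blockSize z i) :
    convexHull ℝ
        {x : Fin k → ℝ | ∃ g : SimpleGraph (Fin n), ∀ i, x i = (addStat z g i : ℝ)} =
      {x : Fin k → ℝ | ∀ T S : Finset (Fin k), Disjoint T S → (T ∪ S).Nonempty →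
        (∑ i ∈ T, x i) - ∑ i ∈ S, x i ≤
          2 * ((∑ i ∈ T, blockSize z i).choose 2 : ℕ) +
            ∑ i ∈ T, ∑ j ∈ Finset.univ \ (T ∪ S), ((blockSize z i * blockSize z j : ℕ) : ℝ)} :=
  stmt7_general z
end
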